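/- arXiv:0710.1912 — 6 statements merged into one kernel-verified Lean document; each statement's English description precedes it below -/
import Mathlib

section
/- Let A be a Noetherian ring, M = ⊕_{i=1}^n A e_i a free A-module of rank n, and ω_1, …, ω_r ∈ M. Write ω_1 ∧ ⋯ ∧ ω_r = Σ_{1 ≤ i_1 < ⋯ < i_r ≤ n} a_{i_1,…,i_r} e_{i_1} ∧ ⋯ ∧ e_{i_r} and let 𝔞 ⊆ A be the ideal generated by all the coefficients a_{i_1,…,i_r}. For each p set Z^p = {φ ∈ Λ^p M : ω_1 ∧ ⋯ ∧ ω_r ∧ φ = 0}, B^p = Σ_{k=1}^r ω_k ∧ Λ^{p-1} M, and H^p = Z^p / B^p. Then there exists an integer ν ≥ 0 such that 𝔞^ν · H^p = 0 for all 0 ≤ p ≤ n. -/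
/-!
For linear forms `ξ₁, …, ξ_r` on `M`, contracting `ω₁ ∧ ⋯ ∧ ω_r ∧ φ` successively with
`ξ₁, …, ξ_r` gives `det (ξ_j(ω_k)) • φ` modulo the right ideal generated by `ω₁, …, ω_r`:
the first contraction, expanded along the `ω`'s, is the Laplace expansion of the determinant,
and every remaining term still carries some `ω_k` because fewer contractions than factors are left.
For the coordinate forms `ξ_j = e_{i_j}^*` these determinants generate `𝔞`, so if
`ω₁ ∧ ⋯ ∧ ω_r ∧ φ = 0` then `𝔞 φ` lies in that ideal, whose degree-`p` part is `B^p`.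
Hence `ν = 1` already works.
-/

noncomputable section

/-- The element `ω₁ ∧ ⋯ ∧ ω_r` of the exterior algebra. -/
def omegaWedge (A : Type*) [CommRing A] (n r : ℕ) (ω : Fin r → (Fin n → A)) :
    ExteriorAlgebra A (Fin n → A) :=
  (List.ofFn fun k => ExteriorAlgebra.ι A (ω k)).prod

/-- The ideal `𝔞` generated by the coefficients `a_{i₁,…,i_r}` of `ω₁ ∧ ⋯ ∧ ω_r`
with respect to the standard basis of `⋀^r M`; the coefficient attached to
`e_{i₁} ∧ ⋯ ∧ e_{i_r}` (for `i₁ < ⋯ < i_r`) is the minor `det (ω_k(i_j))_{k,j}`. -/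
def coeffIdeal (A : Type*) [CommRing A] (n r : ℕ) (ω : Fin r → (Fin n → A)) : Ideal A :=
  Ideal.span {a | ∃ ι : Fin r → Fin n, StrictMono ι ∧
    a = Matrix.det (Matrix.of fun k j => ω k (ι j))}

/-- `Z^p = {φ ∈ ⋀^p M ∣ ω₁ ∧ ⋯ ∧ ω_r ∧ φ = 0}`. -/
def Zcycle (A : Type*) [CommRing A] (n r : ℕ) (ω : Fin r → (Fin n → A)) (p : ℕ) :
    Set (ExteriorAlgebra A (Fin n → A)) :=
  {φ | φ ∈ ⋀[A]^p (Fin n → A) ∧ omegaWedge A n r ω * φ = 0}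

/-- `B^p = Σ_{k=1}^r ω_k ∧ ⋀^{p-1} M` (and `B^0 = 0`). -/
def Bbound (A : Type*) [CommRing A] (n r : ℕ) (ω : Fin r → (Fin n → A)) :
    ℕ → Submodule A (ExteriorAlgebra A (Fin n → A))
  | 0 => ⊥
  | p + 1 => Submodule.span A
      {x | ∃ k : Fin r, ∃ ψ ∈ ⋀[A]^p (Fin n → A), x = ExteriorAlgebra.ι A (ω k) * ψ}

namespace DeRhamSaito

open ExteriorAlgebra CliffordAlgebra

variable {A M : Type*} [CommRing A] [AddCommGroup M] [Module A M]

def contractLeftIter : {s : ℕ} → (Fin s → Module.Dual A M) →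
    ExteriorAlgebra A M →ₗ[A] ExteriorAlgebra A M
  | 0, _ => LinearMap.id
  | _ + 1, ξ => contractLeftIter (Matrix.vecTail ξ) ∘ₗ contractLeft (ξ 0)

@[simp] lemma contractLeftIter_zero (ξ : Fin 0 → Module.Dual A M) (x : ExteriorAlgebra A M) :
    contractLeftIter ξ x = x := rfl

lemma contractLeftIter_succ {s : ℕ} (ξ : Fin (s + 1) → Module.Dual A M)
    (x : ExteriorAlgebra A M) :
    contractLeftIter ξ x = contractLeftIter (Matrix.vecTail ξ) (contractLeft (ξ 0) x) := rfl

lemma contractLeft_ιMulti_mul (ξ : Module.Dual A M) {t : ℕ} (u : Fin (t + 1) → M)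
    (y : ExteriorAlgebra A M) :
    contractLeft ξ (ιMulti A (t + 1) u * y) =
      ∑ k : Fin (t + 1), ((-1 : A) ^ (k : ℕ) * ξ (u k)) • (ιMulti A t (u ∘ k.succAbove) * y)
        + (-1 : A) ^ (t + 1) • (ιMulti A (t + 1) u * contractLeft ξ y) := by
  induction t generalizing y with
  | zero =>
    simp [contractLeft_ι_mul, sub_eq_add_neg]
  | succ t ih =>
    have htail : ∀ k : Fin (t + 1), ιMulti A (t + 1) (u ∘ k.succ.succAbove) =
        ι A (u 0) * ιMulti A t (Matrix.vecTail u ∘ k.succAbove) := by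
      intro k
      rw [ιMulti_succ_apply]
      congr 3
      ext i
      simp [Matrix.vecTail, Fin.succ_succAbove_succ]
    have hzero : u ∘ (0 : Fin (t + 2)).succAbove = Matrix.vecTail u := rfl
    rw [ιMulti_succ_apply, mul_assoc, contractLeft_ι_mul, ih, mul_add, Finset.mul_sum]
    conv_rhs => rw [Fin.sum_univ_succ, hzero]
    simp only [htail, mul_smul_comm, ← mul_assoc, Fin.val_zero, pow_zero, one_mul, Fin.val_succ,
      pow_succ, mul_neg_one, neg_mul, neg_smul, Finset.sum_neg_distrib]
    simp only [mul_neg, mul_smul_comm, ← mul_assoc, Matrix.vecTail, Function.comp_apply]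
    abel

def wedgeSpan {r : ℕ} (v : Fin r → M) : Submodule A (ExteriorAlgebra A M) :=
  Submodule.span A {x | ∃ k y, x = ι A (v k) * y}

lemma ι_mul_mem_wedgeSpan {r : ℕ} (v : Fin r → M) (k : Fin r) (y : ExteriorAlgebra A M) :
    ι A (v k) * y ∈ wedgeSpan v :=
  Submodule.subset_span ⟨k, y, rfl⟩

lemma wedgeSpan_comp_le {r r' : ℕ} (v : Fin r → M) (τ : Fin r' → Fin r) :
    wedgeSpan (A := A) (v ∘ τ) ≤ wedgeSpan v :=
  Submodule.span_le.mpr fun _ ⟨k, y, hx⟩ => hx ▸ ι_mul_mem_wedgeSpan v (τ k) y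

lemma contractLeftIter_ιMulti_mul_mem_wedgeSpan {s t : ℕ} (ξ : Fin s → Module.Dual A M)
    (u : Fin t → M) (hst : s < t) (y : ExteriorAlgebra A M) :
    contractLeftIter ξ (ιMulti A t u * y) ∈ wedgeSpan u := by
  induction s generalizing t y with
  | zero =>
    obtain ⟨t, rfl⟩ := Nat.exists_eq_add_of_lt hst
    rw [contractLeftIter_zero, ιMulti_succ_apply, mul_assoc]
    exact ι_mul_mem_wedgeSpan u 0 _
  | succ s ih =>
    obtain ⟨t, rfl⟩ : ∃ t', t = t' + 1 := ⟨t - 1, by omega⟩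
    rw [contractLeftIter_succ, contractLeft_ιMulti_mul, map_add, map_sum]
    refine add_mem (Submodule.sum_mem _ fun k _ => ?_) ?_
    · rw [map_smul]
      exact Submodule.smul_mem _ _
        (wedgeSpan_comp_le u k.succAbove (ih _ _ (by omega) _))
    · rw [map_smul]
      exact Submodule.smul_mem _ _ (ih _ _ (by omega) _)

lemma contractLeftIter_ιMulti_mul_sub_det_smul_mem_wedgeSpan {r : ℕ} (v : Fin r → M)
    (ξ : Fin r → Module.Dual A M) (x : ExteriorAlgebra A M) :
    contractLeftIter ξ (ιMulti A r v * x) - (Matrix.of fun k j => ξ j (v k)).det • x ∈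
      wedgeSpan v := by
  induction r with
  | zero => simp
  | succ r ih =>
    set minor : Fin (r + 1) → A := fun k =>
      (Matrix.of fun k' j => Matrix.vecTail ξ j (v (k.succAbove k'))).det
    have hlaplace : (Matrix.of fun k j => ξ j (v k)).det =
        ∑ k : Fin (r + 1), (-1 : A) ^ (k : ℕ) * ξ 0 (v k) * minor k :=
      Matrix.det_succ_column_zero _
    have hcontract : contractLeftIter ξ (ιMulti A (r + 1) v * x) -
        (Matrix.of fun k j => ξ j (v k)).det • x =
        ∑ k : Fin (r + 1), ((-1 : A) ^ (k : ℕ) * ξ 0 (v k)) •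
          (contractLeftIter (Matrix.vecTail ξ) (ιMulti A r (v ∘ k.succAbove) * x) - minor k • x)
        + (-1 : A) ^ (r + 1) • contractLeftIter (Matrix.vecTail ξ)
          (ιMulti A (r + 1) v * contractLeft (ξ 0) x) := by
      rw [contractLeftIter_succ, contractLeft_ιMulti_mul, map_add, map_sum, hlaplace,
        Finset.sum_smul]
      simp only [map_smul, smul_sub, smul_smul]
      rw [Finset.sum_sub_distrib]
      abel
    rw [hcontract]
    refine add_mem (Submodule.sum_mem _ fun k _ => Submodule.smul_mem _ _ ?_)
      (Submodule.smul_mem _ _ ?_)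
    · exact wedgeSpan_comp_le v k.succAbove (ih _ _)
    · exact contractLeftIter_ιMulti_mul_mem_wedgeSpan _ _ (Nat.lt_succ_self r) _

lemma mem_Bbound_of_mem_wedgeSpan {A : Type*} [CommRing A] {n r : ℕ} {ω : Fin r → (Fin n → A)}
    {p : ℕ} {z : ExteriorAlgebra A (Fin n → A)} (hz : z ∈ ⋀[A]^p (Fin n → A))
    (hzω : z ∈ wedgeSpan ω) : z ∈ Bbound A n r ω p := by
  let 𝒜 : ℕ → Submodule A (ExteriorAlgebra A (Fin n → A)) := fun i => ⋀[A]^i (Fin n → A)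
  have hπ : wedgeSpan ω ≤ (Bbound A n r ω p).comap (GradedAlgebra.proj 𝒜 p) := by
    refine Submodule.span_le.mpr ?_
    rintro _ ⟨k, y, rfl⟩
    have hι : ι A (ω k) ∈ 𝒜 1 := by
      simpa only [𝒜, pow_one] using LinearMap.mem_range_self (ι A) (ω k)
    rw [SetLike.mem_coe, Submodule.mem_comap, GradedAlgebra.proj_apply]
    cases p with
    | zero =>
      rw [DirectSum.coe_decompose_mul_of_left_mem_of_not_le 𝒜 hι (by omega)]
      exact zero_mem _
    | succ p =>
      rw [DirectSum.coe_decompose_mul_of_left_mem_of_le 𝒜 hι (by omega), Nat.add_sub_cancel]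
      exact Submodule.subset_span ⟨k, _, SetLike.coe_mem _, rfl⟩
  have := hπ hzω
  rwa [Submodule.mem_comap, GradedAlgebra.proj_apply,
    DirectSum.decompose_of_mem_same 𝒜 hz] at this

lemma smul_mem_wedgeSpan_of_mem_coeffIdeal {A : Type*} [CommRing A] {n r : ℕ}
    {ω : Fin r → (Fin n → A)} {φ : ExteriorAlgebra A (Fin n → A)}
    (hφ : omegaWedge A n r ω * φ = 0) {a : A} (ha : a ∈ coeffIdeal A n r ω) :
    a • φ ∈ wedgeSpan ω := by
  suffices coeffIdeal A n r ω ≤ (wedgeSpan ω).comap (LinearMap.toSpanSingleton A _ φ) from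
    this ha
  refine Ideal.span_le.mpr ?_
  rintro _ ⟨σ, -, rfl⟩
  have h := contractLeftIter_ιMulti_mul_sub_det_smul_mem_wedgeSpan ω
    (fun j => LinearMap.proj (σ j)) φ
  rwa [show ιMulti A r ω = omegaWedge A n r ω from rfl, hφ, map_zero, zero_sub,
    neg_mem_iff] at h

end DeRhamSaito

theorem deRham_Saito_annihilation_general (A : Type*) [CommRing A]
    (n r : ℕ) (ω : Fin r → (Fin n → A)) :
    ∃ ν : ℕ, ∀ p ≤ n, ∀ a ∈ coeffIdeal A n r ω ^ ν, ∀ φ ∈ Zcycle A n r ω p,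
      a • φ ∈ Bbound A n r ω p := by
  refine ⟨1, fun p _ a ha φ ⟨hφ, hωφ⟩ => ?_⟩
  rw [pow_one] at ha
  exact DeRhamSaito.mem_Bbound_of_mem_wedgeSpan (Submodule.smul_mem _ a hφ)
    (DeRhamSaito.smul_mem_wedgeSpan_of_mem_coeffIdeal hωφ ha)

/-- **de Rham–Saito lemma, part (1)**: there exists `ν ≥ 0` with `𝔞^ν ⬝ H^p = 0`
for all `0 ≤ p ≤ n`, i.e. `𝔞^ν ⬝ Z^p ⊆ B^p`. -/
theorem deRham_Saito_annihilation (A : Type*) [CommRing A] [IsNoetherianRing A]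
    (n r : ℕ) (ω : Fin r → (Fin n → A)) :
    ∃ ν : ℕ, ∀ p ≤ n, ∀ a ∈ coeffIdeal A n r ω ^ ν, ∀ φ ∈ Zcycle A n r ω p,
      a • φ ∈ Bbound A n r ω p :=
  deRham_Saito_annihilation_general A n r ω
end
end

section
/- Let f ∈ ℂ[z_0, z_1, z_2] be a homogeneous polynomial of degree d ≥ 2 whose partial derivatives have no common zero in ℂ^3 ∖ {0}. If g_0, g_1, g_2 ∈ ℂ[z_0, z_1, z_2] are homogeneous polynomials of the same degree k + 1 with k ≤ d − 3 and g_0 ∂f/∂z_0 + g_1 ∂f/∂z_1 + g_2 ∂f/∂z_2 = 0, then g_0 = g_1 = g_2 = 0. Equivalently, the degree-k graded piece D_0(−log f)_k vanishes for all k ≤ d − 3. -/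
/-!
By the Nullstellensatz, some power `𝔪ᴺ` of the ideal `𝔪 = (z₀, z₁, z₂)` lies in the Jacobian ideal
`(∂₀f, ∂₁f, ∂₂f)`. Since `z₀ᴺ, z₁ᴺ, z₂ᴺ` behave like a regular sequence, an ideal `(u, v)` with
`u, v` coprime contains every `h` with `𝔪ᴺ h ⊆ (u, v)` (a Koszul-type descent in the UFD
`ℂ[z₀, z₁, z₂]`). This first shows that `∂₀f` and `∂₁f` are coprime: a common prime factor `r`
either divides `∂₂f`, and then `z₀ᴺ` and `z₁ᴺ`, or is coprime to it, and then `1 ∈ (∂₂f, r)`,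
although both vanish at the origin. Next, `g₂ ∂₂f ∈ (∂₀f, ∂₁f)` gives `𝔪ᴺ g₂ ⊆ (∂₀f, ∂₁f)`, hence
`g₂ ∈ (∂₀f, ∂₁f)`, which forces `g₂ = 0` because `deg g₂ = k + 1 < d - 1`. Then `∂₀f ∣ g₁ ∂₁f`
gives `∂₀f ∣ g₁`, so `g₁ = 0` for the same degree reason, and finally `g₀ = 0`.
-/

noncomputable section

open MvPolynomial

/-- The polynomial ring `ℂ[z₀, z₁, z₂]`. -/
abbrev PolyRing3 := MvPolynomial (Fin 3) ℂ

section Saturation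

variable {R : Type*} [CommRing R] [IsDomain R] [DecompositionMonoid R]

theorem IsRelPrime.dvd_of_dvd_mul_of_dvd_mul {a b g y : R} (hab : IsRelPrime a b)
    (hay : g ∣ a * y) (hby : g ∣ b * y) : g ∣ y := by
  obtain ⟨g₁, g₂, hg₁, ⟨y', rfl⟩, rfl⟩ := exists_dvd_and_dvd_of_dvd_mul hay
  rcases eq_or_ne g₂ 0 with rfl | hg₂
  · simp
  have hb' : g₁ ∣ b * y' := by
    rw [← mul_dvd_mul_iff_right hg₂]
    simpa only [mul_comm, mul_left_comm, mul_assoc] using hby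
  simpa only [mul_comm] using mul_dvd_mul_left g₂ ((hab.of_dvd_left hg₁).dvd_of_dvd_mul_left hb')

/-- A Koszul 1-cocycle `(x, y, z)` of `a, b, c` modulo `g` is a coboundary. -/
theorem exists_dvd_sub_mul_of_dvd_mul_sub_mul {a b c g x y z : R}
    (hab : IsRelPrime a b) (hcb : IsRelPrime c b) (ha : a ≠ 0) (hc : c ≠ 0) (hg : g ≠ 0)
    (hreg : ∀ w, a * w ∈ Ideal.span {b, c} → w ∈ Ideal.span {b, c})
    (hxy : g ∣ b * x - a * y) (hxz : g ∣ c * x - a * z) (hyz : g ∣ c * y - b * z) :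
    ∃ t, g ∣ x - a * t ∧ g ∣ y - b * t := by
  obtain ⟨u₂, hu₂⟩ := hxy
  obtain ⟨u₁, hu₁⟩ := hxz
  obtain ⟨u₀, hu₀⟩ := hyz
  have hkoszul : a * u₀ = b * u₁ - c * u₂ := by
    refine mul_left_cancel₀ hg ?_
    linear_combination -a * hu₀ + b * hu₁ - c * hu₂
  obtain ⟨α, β, hαβ⟩ := Ideal.mem_span_pair.mp
    (hreg u₀ (Ideal.mem_span_pair.mpr ⟨u₁, -u₂, by linear_combination -hkoszul⟩))
  obtain ⟨γ, hγ⟩ : c ∣ u₁ - a * α :=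
    hcb.dvd_of_dvd_mul_left ⟨u₂ + a * β, by linear_combination -hkoszul - a * hαβ⟩
  have hu₂' : u₂ + a * β = b * γ := by
    refine mul_left_cancel₀ hc ?_
    linear_combination hkoszul + a * hαβ + b * hγ
  obtain ⟨t, ht⟩ : a ∣ x - g * γ :=
    hab.dvd_of_dvd_mul_left ⟨y - g * β, by linear_combination hu₂ + g * hu₂'⟩
  have hyt : y - g * β = b * t := by
    refine mul_left_cancel₀ ha ?_
    linear_combination -hu₂ - g * hu₂' + b * ht
  exact ⟨t, ⟨γ, by linear_combination ht⟩, ⟨β, by linear_combination hyt⟩⟩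

/-- With `a, b, c` and `g, f` regular sequences, `(f, g)` is saturated with respect to
`(a, b, c)`. -/
theorem mem_span_pair_of_mul_mem {a b c f g h : R}
    (hab : IsRelPrime a b) (hcb : IsRelPrime c b) (ha : a ≠ 0) (hc : c ≠ 0)
    (hreg : ∀ w, a * w ∈ Ideal.span {b, c} → w ∈ Ideal.span {b, c})
    (hg : g ≠ 0) (hgf : IsRelPrime g f)
    (hah : a * h ∈ Ideal.span {f, g}) (hbh : b * h ∈ Ideal.span {f, g})
    (hch : c * h ∈ Ideal.span {f, g}) : h ∈ Ideal.span {f, g} := by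
  obtain ⟨x, p, hx⟩ := Ideal.mem_span_pair.mp hah
  obtain ⟨y, q, hy⟩ := Ideal.mem_span_pair.mp hbh
  obtain ⟨z, s, hz⟩ := Ideal.mem_span_pair.mp hch
  have hxy : g ∣ b * x - a * y :=
    hgf.dvd_of_dvd_mul_right ⟨a * q - b * p, by linear_combination b * hx - a * hy⟩
  have hxz : g ∣ c * x - a * z :=
    hgf.dvd_of_dvd_mul_right ⟨a * s - c * p, by linear_combination c * hx - a * hz⟩
  have hyz : g ∣ c * y - b * z :=
    hgf.dvd_of_dvd_mul_right ⟨b * s - c * q, by linear_combination c * hy - b * hz⟩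
  obtain ⟨t, ⟨v, hv⟩, ⟨w, hw⟩⟩ :=
    exists_dvd_sub_mul_of_dvd_mul_sub_mul hab hcb ha hc hg hreg hxy hxz hyz
  obtain ⟨r, hr⟩ : g ∣ h - t * f := hab.dvd_of_dvd_mul_of_dvd_mul
    ⟨v * f + p, by linear_combination -hx + f * hv⟩ ⟨w * f + q, by linear_combination -hy + f * hw⟩
  exact Ideal.mem_span_pair.mpr ⟨t, r, by linear_combination -hr⟩

end Saturation

namespace MvPolynomial

open Finsupp

section Homogeneous

variable {σ R : Type*} [CommSemiring R] {φ : MvPolynomial σ R} {n : ℕ}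

theorem IsHomogeneous.mem_pow_idealOfVars (hφ : φ.IsHomogeneous n) :
    φ ∈ idealOfVars σ R ^ n := by
  rw [mem_pow_idealOfVars_iff]
  intro x hx
  rw [degree_eq_weight_one]
  exact (hφ (mem_support_iff.mp hx)).ge

theorem IsHomogeneous.eq_zero_of_mem_pow_idealOfVars {m : ℕ} (hφ : φ.IsHomogeneous n)
    (h : φ ∈ idealOfVars σ R ^ m) (hnm : n < m) : φ = 0 := by
  ext x
  rw [coeff_zero]
  by_cases hx : degree x = n
  · exact (mem_pow_idealOfVars_iff' m φ).mp h x (hx ▸ hnm)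
  · exact hφ.coeff_eq_zero hx

theorem IsHomogeneous.eq_zero_of_mem_span {m : ℕ} {s : Set (MvPolynomial σ R)}
    (hφ : φ.IsHomogeneous n) (hs : ∀ q ∈ s, q.IsHomogeneous m) (h : φ ∈ Ideal.span s)
    (hnm : n < m) : φ = 0 :=
  hφ.eq_zero_of_mem_pow_idealOfVars
    (Ideal.span_le.mpr (fun q hq => (hs q hq).mem_pow_idealOfVars) h) hnm

theorem coeff_mul_eq_constantCoeff_mul {p q : MvPolynomial σ R} {m : σ →₀ ℕ}
    (hq : ∀ u, degree u < degree m → coeff u q = 0) :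
    coeff m (p * q) = constantCoeff p * coeff m q := by
  classical
  rw [coeff_mul, Finset.sum_eq_single (0, m), constantCoeff_eq]
  · rintro ⟨u, v⟩ huv hne
    rw [Finset.HasAntidiagonal.mem_antidiagonal] at huv
    have hu : u ≠ 0 := by rintro rfl; simp_all
    have : degree v < degree m := by
      rw [← huv, map_add, lt_add_iff_pos_left, pos_iff_ne_zero, Ne, degree_eq_zero_iff]
      exact hu
    rw [hq v this, mul_zero]
  · simp

theorem IsHomogeneous.mem_idealOfVars_of_dvd {K : Type*} [Field K] {F r : MvPolynomial σ K}
    (hF : F.IsHomogeneous n) (hF₀ : F ≠ 0) (hr : r ∣ F) (hr₁ : ¬IsUnit r) :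
    r ∈ idealOfVars σ K := by
  rw [← pow_one (idealOfVars σ K), mem_pow_idealOfVars_iff']
  intro x hx
  obtain rfl : x = 0 := by simpa [degree_eq_zero_iff] using hx
  by_contra hc
  obtain ⟨w, rfl⟩ := hr
  have hw₀ : w ≠ 0 := right_ne_zero_of_mul hF₀
  obtain ⟨v, hv, hmin⟩ := w.support.exists_min_image degree (support_nonempty.mpr hw₀)
  have hlow : coeff v (r * w) = constantCoeff r * coeff v w := by
    refine coeff_mul_eq_constantCoeff_mul fun u hu => ?_
    by_contra h
    exact hu.not_ge (hmin u (mem_support_iff.mpr h))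
  have hv_deg : degree v = n := by
    by_contra h
    rw [hF.coeff_eq_zero h, eq_comm, constantCoeff_eq] at hlow
    exact mul_ne_zero hc (mem_support_iff.mp hv) hlow
  have hw_deg : n ≤ w.totalDegree := hv_deg ▸ le_totalDegree hv
  have hr_deg : r.totalDegree = 0 := by
    have := totalDegree_mul_of_isDomain (left_ne_zero_of_mul hF₀) hw₀
    have := hF.totalDegree_le
    omega
  rw [totalDegree_eq_zero_iff_eq_C] at hr_deg
  exact hr₁ (hr_deg ▸ (Ne.isUnit hc).map C)

end Homogeneous

section PDeriv

variable {σ R : Type*} [CommSemiring R] {p : MvPolynomial σ R} {i : σ}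

theorem notMem_vars_pderiv (j : σ) (h : i ∉ p.vars) : i ∉ (pderiv j p).vars := by
  intro hi
  obtain ⟨m, hm, hmi⟩ := (mem_vars_iff_mem_support i).mp hi
  rw [mem_support_iff, coeff_pderiv] at hm
  have := mem_support_notMem_vars_zero (mem_support_iff.mpr (left_ne_zero_of_mul hm)) h
  rw [Finsupp.add_apply, Nat.add_eq_zero_iff] at this
  exact Finsupp.mem_support_iff.mp hmi this.1

theorem notMem_vars_of_pderiv_eq_zero [CharZero R] [NoZeroDivisors R] (h : pderiv i p = 0) :
    i ∉ p.vars := by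
  intro hi
  obtain ⟨m, hm, hmi⟩ := (mem_vars_iff_mem_support i).mp hi
  have hcoeff := coeff_pderiv (i := i) p (m - single i 1)
  rw [h, coeff_zero, tsub_add_cancel_of_le (single_le_iff.mpr (Nat.one_le_iff_ne_zero.mpr
    (Finsupp.mem_support_iff.mp hmi)))] at hcoeff
  rcases mul_eq_zero.mp hcoeff.symm with h | h
  · exact mem_support_iff.mp hm h
  · exact Nat.cast_add_one_ne_zero _ h

theorem IsHomogeneous.eval_single_eq_zero [DecidableEq σ] {n : ℕ} (hp : p.IsHomogeneous n)
    (hn : n ≠ 0) (hi : i ∉ p.vars) (a : R) : eval (Pi.single i a) p = 0 := by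
  have : eval (Pi.single i a) p = eval 0 p := by
    refine hom_congr_vars (RingHom.ext fun _ => by simp) (fun j hj _ => ?_) rfl
    simp [show j ≠ i from fun h => hi (h ▸ hj)]
  rw [this, eval_zero, constantCoeff_eq]
  exact hp.coeff_eq_zero (by simpa using hn.symm)

theorem IsHomogeneous.pderiv_ne_zero {K : Type*} [Field K] [CharZero K] {f : MvPolynomial σ K}
    {d : ℕ} (hf : f.IsHomogeneous d) (hd : 2 ≤ d)
    (hsm : ∀ z : σ → K, (∀ j, eval z (pderiv j f) = 0) → z = 0) (i : σ) : pderiv i f ≠ 0 := by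
  classical
  intro h
  have hi : i ∉ f.vars := notMem_vars_of_pderiv_eq_zero h
  have hz := hsm (Pi.single i 1) fun j =>
    hf.pderiv.eval_single_eq_zero (by omega) (notMem_vars_pderiv j hi) 1
  simpa using congrFun hz i

end PDeriv

section Nullstellensatz

variable {σ K ι : Type*} [Field K] [IsAlgClosed K] [Finite σ]

theorem exists_pow_idealOfVars_le_span (F : ι → MvPolynomial σ K)
    (hF : ∀ z : σ → K, (∀ i, eval z (F i) = 0) → z = 0) :
    ∃ N, idealOfVars σ K ^ N ≤ Ideal.span (Set.range F) := by
  refine Ideal.exists_pow_le_of_le_radical_of_fg ?_ (idealOfVars_fg σ K)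
  rw [← vanishingIdeal_zeroLocus_eq_radical (K := K), idealOfVars, Ideal.span_le]
  rintro _ ⟨j, rfl⟩
  rw [SetLike.mem_coe, mem_vanishingIdeal_iff]
  intro z hz
  rw [hF z fun i => (mem_zeroLocus_iff.mp hz) _ (Ideal.subset_span ⟨i, rfl⟩), aeval_X]
  rfl

end Nullstellensatz

section Monomial

variable {σ : Type*}

theorem isRelPrime_X_pow {K : Type*} [Field K] {i j : σ} (h : i ≠ j) (m n : ℕ) :
    IsRelPrime (X i ^ m : MvPolynomial σ K) (X j ^ n) :=
  (X_prime.irreducible.isRelPrime_iff_not_dvd.mpr (by simpa using h)).pow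

theorem mem_of_X_pow_mul_mem_span_monomial {R : Type*} [CommSemiring R] {s : Set (σ →₀ ℕ)}
    {i : σ} (hs : ∀ m ∈ s, m i = 0) {n : ℕ} {p : MvPolynomial σ R}
    (h : X i ^ n * p ∈ Ideal.span ((monomial · 1) '' s)) :
    p ∈ Ideal.span ((monomial · (1 : R)) '' s) := by
  classical
  rw [mem_ideal_span_monomial_image] at h ⊢
  intro m hm
  obtain ⟨u, hu, hle⟩ := h (single i n + m) (by
    rwa [mem_support_iff, X_pow_eq_monomial, coeff_monomial_mul, one_mul, ← mem_support_iff])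
  refine ⟨u, hu, fun l => ?_⟩
  have := hle l
  rcases eq_or_ne l i with rfl | hl
  · simp [hs u hu]
  · simpa [single_apply, hl.symm] using this

end Monomial

section Plane

variable {K : Type*} [Field K]

theorem mem_span_pair_of_X_pow_mul_mem {f g h : MvPolynomial (Fin 3) K} {N : ℕ} (hg : g ≠ 0)
    (hgf : IsRelPrime g f) (hX : ∀ i, X i ^ N * h ∈ Ideal.span {f, g}) :
    h ∈ Ideal.span {f, g} := by
  have hspan : Ideal.span ({X 1 ^ N, X 2 ^ N} : Set (MvPolynomial (Fin 3) K)) =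
      Ideal.span ((monomial · (1 : K)) '' {single 1 N, single 2 N}) := by
    simp [Set.image_pair, X_pow_eq_monomial]
  refine mem_span_pair_of_mul_mem (isRelPrime_X_pow (by decide) N N)
    (isRelPrime_X_pow (by decide) N N) (pow_ne_zero _ (X_ne_zero _)) (pow_ne_zero _ (X_ne_zero _))
    (fun w hw => ?_) hg hgf (hX 0) (hX 1) (hX 2)
  rw [hspan] at hw ⊢
  exact mem_of_X_pow_mul_mem_span_monomial (by simp) hw

theorem isRelPrime_of_pow_idealOfVars_le_span {F : Fin 3 → MvPolynomial (Fin 3) K} {n N : ℕ}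
    (hF : (F 0).IsHomogeneous n) (hF₀ : F 0 ≠ 0) (hF₂ : F 2 ∈ idealOfVars (Fin 3) K)
    (hN : idealOfVars (Fin 3) K ^ N ≤ Ideal.span (Set.range F)) : IsRelPrime (F 0) (F 1) := by
  have hX : ∀ J : Ideal (MvPolynomial (Fin 3) K), F 0 ∈ J → F 1 ∈ J → F 2 ∈ J →
      ∀ i, X i ^ N ∈ J := by
    intro J h₀ h₁ h₂ i
    refine Ideal.span_le.mpr ?_
      (hN (Ideal.pow_mem_pow (Ideal.subset_span (Set.mem_range_self i)) N))
    rintro _ ⟨j, rfl⟩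
    fin_cases j <;> assumption
  rw [UniqueFactorizationMonoid.isRelPrime_iff_no_prime_factors hF₀]
  intro r hr₀ hr₁ hr
  rcases hr.irreducible.dvd_or_isRelPrime (n := F 2) with hr₂ | hr₂
  · have hXr := hX (Ideal.span {r}) (Ideal.mem_span_singleton.mpr hr₀)
      (Ideal.mem_span_singleton.mpr hr₁) (Ideal.mem_span_singleton.mpr hr₂)
    exact hr.not_isUnit (isRelPrime_X_pow (by decide) N N
      (Ideal.mem_span_singleton.mp (hXr 0)) (Ideal.mem_span_singleton.mp (hXr 1)))
  · have hsub : Ideal.span {r} ≤ Ideal.span {F 2, r} := Ideal.span_mono (by simp)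
    have hone : (1 : MvPolynomial (Fin 3) K) ∈ Ideal.span {F 2, r} :=
      mem_span_pair_of_X_pow_mul_mem hr.ne_zero hr₂ fun i => by
        rw [mul_one]
        exact hX _ (hsub (Ideal.mem_span_singleton.mpr hr₀))
          (hsub (Ideal.mem_span_singleton.mpr hr₁)) (Ideal.subset_span (by simp)) i
    have hle : Ideal.span {F 2, r} ≤ idealOfVars (Fin 3) K := by
      simp [Ideal.span_le, Set.insert_subset_iff, hF₂,
        hF.mem_idealOfVars_of_dvd hF₀ hr₀ hr.not_isUnit]
    simpa using (C_mem_pow_idealOfVars_iff (σ := Fin 3) 1 (1 : K)).mp (by simpa using hle hone)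

theorem eq_zero_of_sum_mul_eq_zero_of_degree_lt {F g : Fin 3 → MvPolynomial (Fin 3) K}
    {e n N : ℕ} (hF : ∀ i, (F i).IsHomogeneous e) (hF₀ : F 0 ≠ 0) (hF₁ : F 1 ≠ 0)
    (hN : idealOfVars (Fin 3) K ^ N ≤ Ideal.span (Set.range F))
    (hg : ∀ i, (g i).IsHomogeneous n) (hne : n < e) (hrel : ∑ i, g i * F i = 0) : g = 0 := by
  have hcop : IsRelPrime (F 0) (F 1) := isRelPrime_of_pow_idealOfVars_le_span (hF 0) hF₀
    (Ideal.pow_le_self (by omega) (hF 2).mem_pow_idealOfVars) hN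
  rw [Fin.sum_univ_three] at hrel
  have hg₂ : g 2 = 0 := by
    refine (hg 2).eq_zero_of_mem_span (s := {F 0, F 1}) (by simp [hF]) ?_ hne
    refine mem_span_pair_of_X_pow_mul_mem (N := N) hF₁ hcop.symm fun i => ?_
    obtain ⟨c, hc⟩ := Ideal.mem_span_range_iff_exists_fun.mp
      (hN (Ideal.pow_mem_pow (Ideal.subset_span (Set.mem_range_self i)) N))
    rw [Fin.sum_univ_three] at hc
    exact Ideal.mem_span_pair.mpr ⟨c 0 * g 2 - c 2 * g 0, c 1 * g 2 - c 2 * g 1,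
      by linear_combination g 2 * hc - c 2 * hrel⟩
  have hg₁ : g 1 = 0 := by
    refine (hg 1).eq_zero_of_mem_span (s := {F 0}) (by simp [hF]) ?_ hne
    exact Ideal.mem_span_singleton.mpr
      (hcop.dvd_of_dvd_mul_right ⟨-g 0, by linear_combination hrel - F 2 * hg₂⟩)
  have hg₀ : g 0 = 0 :=
    (mul_eq_zero.mp (by linear_combination hrel - F 1 * hg₁ - F 2 * hg₂)).resolve_right hF₀
  ext i : 1
  fin_cases i <;> assumption

end Plane

end MvPolynomial

theorem D0_graded_piece_vanishes_general (d : ℕ)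
    (f : PolyRing3) (hf : f.IsHomogeneous d)
    (hsm : ∀ z : Fin 3 → ℂ, (∀ i, eval z (pderiv i f) = 0) → z = 0)
    (k : ℕ) (hk : k + 3 ≤ d)
    (g : Fin 3 → PolyRing3) (hg : ∀ i, (g i).IsHomogeneous (k + 1))
    (hrel : ∑ i, g i * pderiv i f = 0) :
    ∀ i, g i = 0 := by
  obtain ⟨N, hN⟩ := exists_pow_idealOfVars_le_span (fun i => pderiv i f) hsm
  have hF : ∀ i, pderiv i f ≠ 0 := hf.pderiv_ne_zero (by omega) hsm
  exact congrFun (eq_zero_of_sum_mul_eq_zero_of_degree_lt (F := fun i => pderiv i f)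
    (fun _ => hf.pderiv) (hF 0) (hF 1) hN hg (by omega : k + 1 < d - 1) hrel)

theorem D0_graded_piece_vanishes (d : ℕ) (hd : 2 ≤ d)
    (f : PolyRing3) (hf : f.IsHomogeneous d)
    (hsm : ∀ z : Fin 3 → ℂ, (∀ i, eval z (pderiv i f) = 0) → z = 0)
    (k : ℕ) (hk : k + 3 ≤ d)
    (g : Fin 3 → PolyRing3) (hg : ∀ i, (g i).IsHomogeneous (k + 1))
    (hrel : ∑ i, g i * pderiv i f = 0) :
    ∀ i, g i = 0 :=
  D0_graded_piece_vanishes_general d f hf hsm k hk g hg hrel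
end
end

section
/- Let t ∈ ℂ with t^3 ≠ 1 and let f_t = z_0^3 + z_1^3 + z_2^3 − 3t z_0 z_1 z_2 be the Hesse cubic. For a nonzero linear form α = α_0 z_0 + α_1 z_1 + α_2 z_2, there exist (a_0, a_1, a_2) ∈ ℂ^3 ∖ {0} and a linear form β with a_0 ∂f_t/∂z_0 + a_1 ∂f_t/∂z_1 + a_2 ∂f_t/∂z_2 = α · β if and only if t(α_0^3 + α_1^3 + α_2^3) − (t^3 + 2) α_0 α_1 α_2 = 0. In other words, the Cayleyan curve of the Hesse cubic f_t is the cubic curve in the dual projective plane defined by t(α_0^3 + α_1^3 + α_2^3) − (t^3 + 2) α_0 α_1 α_2. -/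
/-!
The Cayleyan curve of the Hesse cubic
`f_t = z₀³ + z₁³ + z₂³ − 3t z₀z₁z₂` (with `t³ ≠ 1`) is the cubic
`t(α₀³ + α₁³ + α₂³) − (t³ + 2) α₀α₁α₂ = 0` in the dual projective plane:
a nonzero linear form `α` divides some nontrivial linear combination of the
partial derivatives of `f_t` if and only if its coefficients satisfy this
equation.
-/

noncomputable section

open MvPolynomial

/-- The linear form with coefficient vector `α`. -/
def linForm (α : Fin 3 → ℂ) : PolyRing3 := ∑ i, C (α i) * X i

/-- The Hesse cubic `f_t = z₀³ + z₁³ + z₂³ − 3t z₀z₁z₂`. -/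
def hesse (t : ℂ) : PolyRing3 :=
  X 0 ^ 3 + X 1 ^ 3 + X 2 ^ 3 - C (3 * t) * (X 0 * X 1 * X 2)

/-!
Comparing coefficients, `∑ aᵢ ∂ᵢf_t = α · β` says `3aᵢ = αᵢβᵢ` and
`−3t aᵢ = α_{i+1}β_{i+2} + α_{i+2}β_{i+1}` (indices mod 3). Eliminating `a` leaves the linear
system `M β = 0` for a symmetric matrix `M` whose determinant is minus the Cayleyan equation.
Conversely a kernel vector `β ≠ 0` gives `a = αβ/3`, which is nonzero because `ℂ[z]` is a domain,
so `α · β ≠ 0`.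
-/

open Matrix

def quadPoly {R : Type*} [CommRing R] (c d : Fin 3 → R) : MvPolynomial (Fin 3) R :=
  ∑ i, (C (c i) * X i ^ 2 + C (d i) * (X (i + 1) * X (i + 2)))

theorem quadPoly_inj {R : Type*} [CommRing R] {c d c' d' : Fin 3 → R} :
    quadPoly c d = quadPoly c' d' ↔ c = c' ∧ d = d' := by
  refine ⟨fun h => ?_, fun h => by rw [h.1, h.2]⟩
  have v (x : Fin 3 → R) := congrArg (eval x) h
  simp only [quadPoly, Fin.sum_univ_three, map_add, map_mul, map_pow, eval_C, eval_X] at v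
  have v0 : c 0 = c' 0 := by simpa using v ![1, 0, 0]
  have v1 : c 1 = c' 1 := by simpa using v ![0, 1, 0]
  have v2 : c 2 = c' 2 := by simpa using v ![0, 0, 1]
  have v01 : c 0 + c 1 + d 2 = c' 0 + c' 1 + d' 2 := by simpa using v ![1, 1, 0]
  have v02 : c 0 + d 1 + c 2 = c' 0 + d' 1 + c' 2 := by simpa using v ![1, 0, 1]
  have v12 : d 0 + c 1 + c 2 = d' 0 + c' 1 + c' 2 := by simpa using v ![0, 1, 1]
  simp only [_root_.funext_iff, Fin.forall_fin_succ, IsEmpty.forall_iff, and_true,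
    Fin.succ_zero_eq_one, Fin.succ_one_eq_two]
  refine ⟨⟨v0, v1, v2⟩, ?_, ?_, ?_⟩
  · linear_combination v12 - v1 - v2
  · linear_combination v02 - v0 - v2
  · linear_combination v01 - v0 - v1

theorem eval_single_linForm (α : Fin 3 → ℂ) (i : Fin 3) :
    eval (Pi.single i 1) (linForm α) = α i := by
  simp [linForm, Pi.single_apply]

theorem linForm_eq_zero_iff {α : Fin 3 → ℂ} : linForm α = 0 ↔ α = 0 := by
  refine ⟨fun h => funext fun i => ?_, fun h => by simp [h, linForm]⟩
  simpa using (eval_single_linForm α i).symm.trans (congrArg (eval _) h)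

theorem linForm_mul_linForm (α β : Fin 3 → ℂ) :
    linForm α * linForm β =
      quadPoly (α * β) fun i => α (i + 1) * β (i + 2) + α (i + 2) * β (i + 1) := by
  simp only [linForm, quadPoly, Fin.sum_univ_three, Pi.mul_apply, map_add, map_mul,
    Fin.isValue, Fin.reduceAdd]
  ring

theorem sum_C_mul_pderiv_hesse (t : ℂ) (a : Fin 3 → ℂ) :
    ∑ i, C (a i) * pderiv i (hesse t) = quadPoly ((3 : ℂ) • a) ((-3 * t) • a) := by
  simp only [hesse, quadPoly, Fin.sum_univ_three, map_add, map_sub, map_mul, pderiv_C, pderiv_X,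
    pderiv_mul, pderiv_pow]
  simp only [Pi.single_apply, Pi.smul_apply, smul_eq_mul, map_ofNat, C_mul, C_neg, Fin.reduceEq,
    Fin.reduceAdd, if_true, if_false, Nat.cast_ofNat, Nat.add_one_sub_one]
  ring

def cayleyanMatrix (t : ℂ) (α : Fin 3 → ℂ) : Matrix (Fin 3) (Fin 3) ℂ :=
  !![t * α 0, α 2, α 1; α 2, t * α 1, α 0; α 1, α 0, t * α 2]

theorem cayleyanMatrix_mulVec (t : ℂ) (α β : Fin 3 → ℂ) :
    cayleyanMatrix t α *ᵥ β =
      t • (α * β) + fun i => α (i + 1) * β (i + 2) + α (i + 2) * β (i + 1) := by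
  ext i
  fin_cases i <;>
    simp only [cayleyanMatrix, mulVec, dotProduct, Fin.sum_univ_three, of_apply, cons_val',
      cons_val_zero, cons_val_one, cons_val, cons_val_fin_one, Pi.add_apply, Pi.smul_apply,
      Pi.mul_apply, smul_eq_mul, Fin.reduceFinMk, Fin.reduceAdd] <;>
    ring

theorem det_cayleyanMatrix (t : ℂ) (α : Fin 3 → ℂ) :
    (cayleyanMatrix t α).det =
      -(t * (α 0 ^ 3 + α 1 ^ 3 + α 2 ^ 3) - (t ^ 3 + 2) * (α 0 * α 1 * α 2)) := by
  simp only [cayleyanMatrix, det_fin_three, of_apply, cons_val', cons_val_zero, cons_val_one,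
    cons_val, cons_val_fin_one]
  ring

theorem sum_C_mul_pderiv_hesse_eq_linForm_mul_iff (t : ℂ) (a α β : Fin 3 → ℂ) :
    ∑ i, C (a i) * pderiv i (hesse t) = linForm α * linForm β ↔
      (3 : ℂ) • a = α * β ∧ cayleyanMatrix t α *ᵥ β = 0 := by
  rw [sum_C_mul_pderiv_hesse, linForm_mul_linForm, quadPoly_inj, cayleyanMatrix_mulVec]
  refine and_congr_right fun h => ?_
  rw [← h, smul_smul, ← neg_eq_iff_add_eq_zero, ← neg_smul, show -(t * 3) = -3 * t by ring]

theorem cayleyan_of_hesse_general (t : ℂ)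
    (α : Fin 3 → ℂ) (hα : α ≠ 0) :
    (∃ a : Fin 3 → ℂ, a ≠ 0 ∧ ∃ b : Fin 3 → ℂ,
        ∑ i, C (a i) * pderiv i (hesse t) = linForm α * linForm b) ↔
      t * (α 0 ^ 3 + α 1 ^ 3 + α 2 ^ 3) - (t ^ 3 + 2) * (α 0 * α 1 * α 2) = 0 := by
  rw [← neg_eq_zero, ← det_cayleyanMatrix, ← exists_mulVec_eq_zero_iff]
  constructor
  · rintro ⟨a, ha, b, hab⟩
    rw [sum_C_mul_pderiv_hesse_eq_linForm_mul_iff] at hab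
    refine ⟨b, ?_, hab.2⟩
    rintro rfl
    exact ha (by simpa using hab.1)
  · rintro ⟨b, hb, hMb⟩
    set a := (3 : ℂ)⁻¹ • (α * b)
    have hab : ∑ i, C (a i) * pderiv i (hesse t) = linForm α * linForm b :=
      (sum_C_mul_pderiv_hesse_eq_linForm_mul_iff ..).2 ⟨by simp [a, smul_smul], hMb⟩
    refine ⟨a, fun ha => ?_, b, hab⟩
    have hprod : linForm α * linForm b = 0 := by simp [← hab, ha]
    rcases mul_eq_zero.1 hprod with h | h
    exacts [hα (linForm_eq_zero_iff.1 h), hb (linForm_eq_zero_iff.1 h)]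

theorem cayleyan_of_hesse (t : ℂ) (ht : t ^ 3 ≠ 1)
    (α : Fin 3 → ℂ) (hα : α ≠ 0) :
    (∃ a : Fin 3 → ℂ, a ≠ 0 ∧ ∃ b : Fin 3 → ℂ,
        ∑ i, C (a i) * pderiv i (hesse t) = linForm α * linForm b) ↔
      t * (α 0 ^ 3 + α 1 ^ 3 + α 2 ^ 3) - (t ^ 3 + 2) * (α 0 * α 1 * α 2) = 0 :=
  cayleyan_of_hesse_general t α hα
end
end

section
/- Let t ∈ ℂ with t^3 ≠ 1 and let f_t = z_0^3 + z_1^3 + z_2^3 − 3t z_0 z_1 z_2. A homogeneous cubic g = Σ_{0 ≤ i ≤ j ≤ k ≤ 2} a_{ijk} z_i z_j z_k ∈ ℂ[z_0, z_1, z_2] lies in the degree-3 part J(f_t)_3 of the Jacobi ideal of f_t if and only if a_{012} + t(a_{000} + a_{111} + a_{222}) = 0. In particular, J(f_t)_3 is a hyperplane in the 10-dimensional space of cubic forms. -/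
/-!
The functional `φ(g) = a₀₁₂ + t(a₀₀₀ + a₁₁₁ + a₂₂₂)` kills every `c · ∂ᵢf_t`, by a direct
coefficient computation, so it vanishes on `J(f_t)`. Conversely, for `{i, j, k} = {0, 1, 2}` we
have `∂ᵢf_t = 3(zᵢ² − t zⱼz_k)`, so `J` contains `zᵢ³ − t z₀z₁z₂` and `zᵢ²zⱼ − t zⱼ²z_k`. Along
the cycle `u = zᵢ²zⱼ, v = zⱼ²z_k, w = z_k²zᵢ` the elements `u − tv, v − tw, w − tu ∈ J` telescope
to `(1 − t³)u ∈ J`, so all six monomials `zᵢ²zⱼ` lie in `J` when `t³ ≠ 1`. Hence every cubic `g`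
is congruent modulo `J` to `φ(g) z₀z₁z₂`, and `φ(z₀z₁z₂) = 1`.
-/

noncomputable section

open MvPolynomial

def jacobiIdeal {σ R : Type*} [CommRing R] (f : MvPolynomial σ R) : Ideal (MvPolynomial σ R) :=
  Ideal.span (Set.range fun i => pderiv i f)

theorem pderiv_mem_jacobiIdeal {σ R : Type*} [CommRing R] (f : MvPolynomial σ R) (i : σ) :
    pderiv i f ∈ jacobiIdeal f :=
  Ideal.subset_span ⟨i, rfl⟩

theorem Ideal.mem_of_cyclic_sub_mul_mem {A : Type*} [CommRing A] {I : Ideal A} {s u v w : A}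
    (hs : IsUnit (1 - s ^ 3)) (huv : u - s * v ∈ I) (hvw : v - s * w ∈ I)
    (hwu : w - s * u ∈ I) : u ∈ I := by
  have h : (1 - s ^ 3) * u = (u - s * v) + s * (v - s * w) + s ^ 2 * (w - s * u) := by ring
  rw [← I.unit_mul_mem_iff_mem hs, h]
  exact I.add_mem (I.add_mem huv (I.mul_mem_left _ hvw)) (I.mul_mem_left _ hwu)

section Exponents

open Finsupp

theorem Finsupp.degree_eq_three_cases (m : Fin 3 →₀ ℕ) (hm : m.degree = 3) :
    m = single 0 1 + single 1 1 + single 2 1 ∨ (∃ i, m = single i 3) ∨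
      ∃ i j k : Fin 3, i ≠ j ∧ i ≠ k ∧ j ≠ k ∧ m = single i 2 + single j 1 := by
  have hm' : m = single 0 (m 0) + single 1 (m 1) + single 2 (m 2) := by
    ext i; fin_cases i <;> simp
  rw [degree_eq_sum, Fin.sum_univ_three] at hm
  rw [hm', show m 2 = 3 - m 0 - m 1 by omega]
  have h0 : m 0 ≤ 3 := by omega
  have h1 : m 1 ≤ 3 := by omega
  interval_cases m 0 <;> interval_cases m 1 <;> first | omega |
    simp [Finsupp.ext_iff, Fin.forall_fin_succ, Fin.exists_fin_succ, single_apply]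

theorem Finsupp.single_add_single_add_single_eq {i j k : Fin 3} (hij : i ≠ j) (hik : i ≠ k)
    (hjk : j ≠ k) :
    (single 0 1 + single 1 1 + single 2 1 : Fin 3 →₀ ℕ) =
      single i 1 + (single j 1 + single k 1) := by
  fin_cases i <;> fin_cases j <;> fin_cases k <;>
    simp_all [Finsupp.ext_iff, Fin.forall_fin_succ, single_apply]

end Exponents

variable {t : ℂ}

theorem hesse_eq_of_pairwise_ne {i j k : Fin 3} (hij : i ≠ j) (hik : i ≠ k) (hjk : j ≠ k) :
    hesse t = X i ^ 3 + X j ^ 3 + X k ^ 3 - C (3 * t) * (X i * X j * X k) := by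
  unfold hesse
  fin_cases i <;> fin_cases j <;> fin_cases k <;> simp at hij hik hjk ⊢ <;> ring

theorem pderiv_hesse {i j k : Fin 3} (hij : i ≠ j) (hik : i ≠ k) (hjk : j ≠ k) :
    pderiv i (hesse t) = 3 * X i ^ 2 - 3 * C t * (X j * X k) := by
  rw [hesse_eq_of_pairwise_ne hij hik hjk]
  simp only [map_add, map_sub, Derivation.leibniz_pow, Derivation.leibniz, pderiv_X_self,
    pderiv_X_of_ne hij.symm, pderiv_X_of_ne hik.symm, pderiv_C, smul_eq_mul]
  rw [C_mul, map_ofNat]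
  ring

theorem pderiv_hesse_eq_monomial {i j k : Fin 3} (hij : i ≠ j) (hik : i ≠ k) (hjk : j ≠ k) :
    pderiv i (hesse t) = monomial (Finsupp.single i 2) 3 -
      monomial (Finsupp.single j 1 + Finsupp.single k 1) (3 * t) := by
  rw [pderiv_hesse hij hik hjk, X_pow_eq_monomial, X, X, monomial_mul,
    show (3 : PolyRing3) = C 3 from rfl, ← C_mul, C_mul_monomial, C_mul_monomial]
  simp only [mul_one]

/-- The linear form `a₀₁₂ + t (a₀₀₀ + a₁₁₁ + a₂₂₂)` on cubics. -/
def hesseFunctional (t : ℂ) : PolyRing3 →ₗ[ℂ] ℂ :=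
  lcoeff ℂ (Finsupp.single 0 1 + Finsupp.single 1 1 + Finsupp.single 2 1) +
    t • (lcoeff ℂ (Finsupp.single 0 3) + lcoeff ℂ (Finsupp.single 1 3) +
      lcoeff ℂ (Finsupp.single 2 3))

theorem hesseFunctional_X_mul_X_mul_X : hesseFunctional t (X 0 * X 1 * X 2) = 1 := by
  simp [hesseFunctional, X, monomial_mul, Finsupp.ext_iff, Fin.forall_fin_succ,
    Finsupp.single_apply]

theorem hesseFunctional_mul_pderiv_hesse (c : PolyRing3) {i j k : Fin 3} (hij : i ≠ j)
    (hik : i ≠ k) (hjk : j ≠ k) : hesseFunctional t (c * pderiv i (hesse t)) = 0 := by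
  rw [pderiv_hesse_eq_monomial hij hik hjk]
  simp only [hesseFunctional, Finsupp.single_add_single_add_single_eq hij hik hjk,
    LinearMap.add_apply, LinearMap.smul_apply, lcoeff_apply, mul_sub, coeff_sub,
    coeff_mul_monomial', le_add_iff_nonneg_left, zero_le, if_true, add_tsub_cancel_right]
  fin_cases i <;> fin_cases j <;> fin_cases k <;>
    simp_all [Finsupp.le_def, Fin.forall_fin_succ, Finsupp.single_apply, ← Finsupp.single_tsub] <;>
    ring

theorem hesseFunctional_eq_zero_of_mem {g : PolyRing3} (hg : g ∈ jacobiIdeal (hesse t)) :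
    hesseFunctional t g = 0 := by
  obtain ⟨c, rfl⟩ := Ideal.mem_span_range_iff_exists_fun.mp hg
  rw [map_sum]
  refine Finset.sum_eq_zero fun i _ => ?_
  obtain ⟨j, k, hij, hik, hjk⟩ : ∃ j k : Fin 3, i ≠ j ∧ i ≠ k ∧ j ≠ k := by
    fin_cases i <;> decide
  exact hesseFunctional_mul_pderiv_hesse (c i) hij hik hjk

theorem MvPolynomial.isUnit_three {σ K : Type*} [Field K] [CharZero K] :
    IsUnit (3 : MvPolynomial σ K) :=
  (three_ne_zero (α := K)).isUnit.map C

theorem X_pow_three_sub_mem_jacobiIdeal (i : Fin 3) :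
    X i ^ 3 - C t * (X 0 * X 1 * X 2) ∈ jacobiIdeal (hesse t) := by
  have h : X i * pderiv i (hesse t) = 3 * (X i ^ 3 - C t * (X 0 * X 1 * X 2)) := by
    obtain rfl | rfl | rfl : i = 0 ∨ i = 1 ∨ i = 2 := by fin_cases i <;> simp
    · rw [pderiv_hesse (j := 1) (k := 2) (by decide) (by decide) (by decide)]; ring
    · rw [pderiv_hesse (j := 0) (k := 2) (by decide) (by decide) (by decide)]; ring
    · rw [pderiv_hesse (j := 0) (k := 1) (by decide) (by decide) (by decide)]; ring
  rw [← Ideal.unit_mul_mem_iff_mem _ isUnit_three, ← h]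
  exact Ideal.mul_mem_left _ _ (pderiv_mem_jacobiIdeal _ i)

theorem X_sq_mul_X_sub_mem_jacobiIdeal {i j k : Fin 3} (hij : i ≠ j) (hik : i ≠ k)
    (hjk : j ≠ k) : X i ^ 2 * X j - C t * (X j ^ 2 * X k) ∈ jacobiIdeal (hesse t) := by
  have h : X j * pderiv i (hesse t) = 3 * (X i ^ 2 * X j - C t * (X j ^ 2 * X k)) := by
    rw [pderiv_hesse hij hik hjk]; ring
  rw [← Ideal.unit_mul_mem_iff_mem _ isUnit_three, ← h]
  exact Ideal.mul_mem_left _ _ (pderiv_mem_jacobiIdeal _ i)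

theorem X_sq_mul_X_mem_jacobiIdeal (ht : t ^ 3 ≠ 1) {i j k : Fin 3} (hij : i ≠ j) (hik : i ≠ k)
    (hjk : j ≠ k) : X i ^ 2 * X j ∈ jacobiIdeal (hesse t) := by
  refine Ideal.mem_of_cyclic_sub_mul_mem (s := C t) (v := X j ^ 2 * X k) (w := X k ^ 2 * X i) ?_
    (X_sq_mul_X_sub_mem_jacobiIdeal hij hik hjk)
    (X_sq_mul_X_sub_mem_jacobiIdeal hjk hij.symm hik.symm)
    (X_sq_mul_X_sub_mem_jacobiIdeal hik.symm hjk.symm hij)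
  rw [← C_pow, ← C_1, ← C_sub]
  exact (sub_ne_zero.mpr (Ne.symm ht)).isUnit.map C

theorem exists_monomial_sub_smul_mem_jacobiIdeal (ht : t ^ 3 ≠ 1) (m : Fin 3 →₀ ℕ)
    (hm : m.degree = 3) :
    ∃ c : ℂ, monomial m 1 - c • (X 0 * X 1 * X 2) ∈ jacobiIdeal (hesse t) := by
  rcases m.degree_eq_three_cases hm with rfl | ⟨i, rfl⟩ | ⟨i, j, k, hij, hik, hjk, rfl⟩
  · refine ⟨1, ?_⟩
    simp [X, monomial_mul]
  · refine ⟨t, ?_⟩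
    simpa [← X_pow_eq_monomial, smul_eq_C_mul] using X_pow_three_sub_mem_jacobiIdeal i
  · refine ⟨0, ?_⟩
    have h := X_sq_mul_X_mem_jacobiIdeal ht hij hik hjk
    rw [zero_smul, sub_zero]
    rwa [X_pow_eq_monomial, X, monomial_mul, one_mul] at h

theorem exists_sub_smul_mem_jacobiIdeal (ht : t ^ 3 ≠ 1) {g : PolyRing3}
    (hg : g.IsHomogeneous 3) : ∃ c : ℂ, g - c • (X 0 * X 1 * X 2) ∈ jacobiIdeal (hesse t) := by
  choose! c hc using exists_monomial_sub_smul_mem_jacobiIdeal ht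
  refine ⟨∑ m ∈ g.support, coeff m g * c m, ?_⟩
  have hsum : g - (∑ m ∈ g.support, coeff m g * c m) • (X 0 * X 1 * X 2) =
      ∑ m ∈ g.support, C (coeff m g) * (monomial m 1 - c m • (X 0 * X 1 * X 2)) := by
    conv_lhs => rw [g.as_sum]
    simp [Finset.sum_smul, mul_sub, Finset.sum_sub_distrib, smul_eq_C_mul, C_mul_monomial,
      mul_assoc]
  rw [hsum]
  refine Ideal.sum_mem _ fun m hm => Ideal.mul_mem_left _ _ (hc m ?_)
  by_contra hdeg
  exact mem_support_iff.mp hm (hg.coeff_eq_zero hdeg)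

theorem hesse_jacobi_hyperplane (t : ℂ) (ht : t ^ 3 ≠ 1)
    (g : PolyRing3) (hg : g.IsHomogeneous 3) :
    g ∈ Ideal.span (Set.range fun i => pderiv i (hesse t)) ↔
      coeff (Finsupp.single 0 1 + Finsupp.single 1 1 + Finsupp.single 2 1) g +
        t * (coeff (Finsupp.single 0 3) g + coeff (Finsupp.single 1 3) g +
          coeff (Finsupp.single 2 3) g) = 0 := by
  change g ∈ jacobiIdeal (hesse t) ↔ hesseFunctional t g = 0
  obtain ⟨c, hc⟩ := exists_sub_smul_mem_jacobiIdeal ht hg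
  have hφ : hesseFunctional t g = c := by
    have h := hesseFunctional_eq_zero_of_mem hc
    rwa [map_sub, map_smul, hesseFunctional_X_mul_X_mul_X, smul_eq_mul, mul_one,
      sub_eq_zero] at h
  refine ⟨hesseFunctional_eq_zero_of_mem, fun h => ?_⟩
  rw [hφ] at h
  simpa [h] using hc
end
end

section
/- Let a, b, c ∈ ℂ^× and let f = a z_0^3 + b z_1^3 + c z_2^3. For a nonzero linear form α = α_0 z_0 + α_1 z_1 + α_2 z_2, there exist (a_0, a_1, a_2) ∈ ℂ^3 ∖ {0} and a linear form β with a_0 ∂f/∂z_0 + a_1 ∂f/∂z_1 + a_2 ∂f/∂z_2 = α · β if and only if α_0 α_1 α_2 = 0. In other words, every member of the family {a z_0^3 + b z_1^3 + c z_2^3 = 0}, a, b, c ∈ ℂ^×, has the same Cayleyan curve, namely the union of the three coordinate lines α_0 α_1 α_2 = 0 in the dual projective plane. -/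
/-!
The combination `∑ vᵢ ∂f/∂zᵢ = 3 (a v₀ z₀² + b v₁ z₁² + c v₂ z₂²)` is an arbitrary diagonal
quadratic form, nonzero exactly when `v` is. A product `α β` of linear forms is diagonal iff the
three cross terms `αᵢ βⱼ + αⱼ βᵢ` vanish. When every `αᵢ ≠ 0` these equations force `β = 0`
(`2 α₁ α₂ β₀` is a combination of them, and symmetrically), so `α β = 0`. When some `αₖ = 0`,
flipping the sign of one coordinate of `α` gives a `β` for which `α β` is a difference of squares.
-/

noncomputable section

open MvPolynomial

theorem pderiv_sum_C_mul_X_pow {σ R : Type*} [Fintype σ] [CommRing R] (coef : σ → R) (n : ℕ)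
    (i : σ) :
    pderiv i (∑ j, C (coef j) * X j ^ (n + 1)) = C ((n + 1) * coef i) * X i ^ n := by
  classical
  simp [pderiv_X, Pi.single_apply]
  ring

theorem exists_ne_zero_mul_iff {ι K : Type*} [Field K] {u : ι → K} (hu : ∀ i, u i ≠ 0)
    (P : (ι → K) → Prop) : (∃ v : ι → K, v ≠ 0 ∧ P (fun i => v i * u i)) ↔ ∃ d, d ≠ 0 ∧ P d := by
  constructor
  · rintro ⟨v, hv, h⟩
    refine ⟨fun i => v i * u i, fun hvu => hv (funext fun i => ?_), h⟩
    exact (mul_eq_zero.mp (congrFun hvu i)).resolve_right (hu i)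
  · rintro ⟨d, hd, h⟩
    have hdu : (fun i => d i / u i * u i) = d := funext fun i => div_mul_cancel₀ (d i) (hu i)
    refine ⟨fun i => d i / u i, fun h0 => hd (funext fun i => ?_), by rwa [hdu]⟩
    simpa [hu i] using congrFun h0 i

/-- The product of the linear forms with coefficients `α` and `β` has no mixed monomials. -/
def NoCrossTerms {K : Type*} [CommRing K] (α β : Fin 3 → K) : Prop :=
  α 0 * β 1 + α 1 * β 0 = 0 ∧ α 0 * β 2 + α 2 * β 0 = 0 ∧ α 1 * β 2 + α 2 * β 1 = 0

theorem NoCrossTerms.eq_zero {K : Type*} [Field K] (h2 : (2 : K) ≠ 0) {α β : Fin 3 → K}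
    (h : NoCrossTerms α β) (hα : α 0 * α 1 * α 2 ≠ 0) : β = 0 := by
  obtain ⟨h01, h02, h12⟩ := h
  funext i
  refine (mul_eq_zero.mp ?_).resolve_left (mul_ne_zero h2 hα)
  fin_cases i <;> simp only [Fin.zero_eta, Fin.mk_one, Fin.reduceFinMk]
  · linear_combination α 0 * (α 1 * h02 + α 2 * h01 - α 0 * h12)
  · linear_combination α 1 * (α 0 * h12 + α 2 * h01 - α 1 * h02)
  · linear_combination α 2 * (α 0 * h12 + α 1 * h02 - α 2 * h01)

theorem exists_noCrossTerms_of_mul_eq_zero {K : Type*} [CommRing K] [NoZeroDivisors K]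
    {α : Fin 3 → K} (h : α 0 * α 1 * α 2 = 0) :
    ∃ β : Fin 3 → K, (∀ i, β i = α i ∨ β i = -α i) ∧ NoCrossTerms α β := by
  rcases mul_eq_zero.mp h with h | h
  · refine ⟨![α 0, α 1, -α 2], fun i => ?_, ?_⟩
    · fin_cases i <;> simp
    · simp only [NoCrossTerms, Matrix.cons_val_zero, Matrix.cons_val_one, Matrix.cons_val_two,
        Matrix.head_cons, Matrix.tail_cons]
      exact ⟨by linear_combination 2 * h, by ring, by ring⟩
  · refine ⟨![α 0, -α 1, α 2], fun i => ?_, ?_⟩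
    · fin_cases i <;> simp
    · simp only [NoCrossTerms, Matrix.cons_val_zero, Matrix.cons_val_one, Matrix.cons_val_two,
        Matrix.head_cons, Matrix.tail_cons]
      exact ⟨by ring, by linear_combination 2 * α 0 * h, by ring⟩

theorem eval_linForm (x α : Fin 3 → ℂ) : eval x (linForm α) = ∑ i, α i * x i := by
  simp [linForm]

theorem sum_C_mul_X_sq_eq_linForm_mul_iff {d α β : Fin 3 → ℂ} :
    ∑ i, C (d i) * X i ^ 2 = linForm α * linForm β ↔
      d = α * β ∧ NoCrossTerms α β := by
  constructor
  · intro h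
    have key (x : Fin 3 → ℂ) :
        ∑ i, d i * x i ^ 2 = (∑ i, α i * x i) * ∑ i, β i * x i := by
      simpa [eval_linForm] using congrArg (eval x) h
    have e0 := key ![1, 0, 0]
    have e1 := key ![0, 1, 0]
    have e2 := key ![0, 0, 1]
    have e01 := key ![1, 1, 0]
    have e02 := key ![1, 0, 1]
    have e12 := key ![0, 1, 1]
    simp [Fin.sum_univ_three] at e0 e1 e2 e01 e02 e12
    refine ⟨funext fun i => ?_, by linear_combination e0 + e1 - e01,
      by linear_combination e0 + e2 - e02, by linear_combination e1 + e2 - e12⟩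
    fin_cases i <;> simpa
  · rintro ⟨rfl, h01, h02, h12⟩
    have c01 := congrArg (C : ℂ → PolyRing3) h01
    have c02 := congrArg (C : ℂ → PolyRing3) h02
    have c12 := congrArg (C : ℂ → PolyRing3) h12
    simp only [map_add, map_mul, map_zero] at c01 c02 c12
    simp only [linForm, Fin.sum_univ_three, Pi.mul_apply, map_mul]
    linear_combination (-(X 0 * X 1) : PolyRing3) * c01 - X 0 * X 2 * c02 - X 1 * X 2 * c12

theorem exists_sum_C_mul_X_sq_eq_linForm_mul_iff {α : Fin 3 → ℂ} (hα : α ≠ 0) :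
    (∃ d : Fin 3 → ℂ, d ≠ 0 ∧ ∃ β, ∑ i, C (d i) * X i ^ 2 = linForm α * linForm β) ↔
      α 0 * α 1 * α 2 = 0 := by
  simp only [sum_C_mul_X_sq_eq_linForm_mul_iff]
  constructor
  · rintro ⟨_, hd, β, rfl, hβ⟩
    by_contra hne
    rw [hβ.eq_zero two_ne_zero hne, mul_zero] at hd
    exact hd rfl
  · intro h
    obtain ⟨β, hβ, hcross⟩ := exists_noCrossTerms_of_mul_eq_zero h
    refine ⟨α * β, fun hαβ => hα (funext fun i => ?_), β, rfl, hcross⟩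
    rcases hβ i with hb | hb <;> simpa [hb] using congrFun hαβ i

theorem cayleyan_of_fermat_family (a b c : ℂ) (ha : a ≠ 0) (hb : b ≠ 0) (hc : c ≠ 0)
    (α : Fin 3 → ℂ) (hα : α ≠ 0) :
    (∃ v : Fin 3 → ℂ, v ≠ 0 ∧ ∃ β : Fin 3 → ℂ,
        ∑ i, C (v i) * pderiv i (C a * X 0 ^ 3 + C b * X 1 ^ 3 + C c * X 2 ^ 3) =
          linForm α * linForm β) ↔
      α 0 * α 1 * α 2 = 0 := by
  have hf : (C a * X 0 ^ 3 + C b * X 1 ^ 3 + C c * X 2 ^ 3 : PolyRing3) =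
      ∑ j, C (![a, b, c] j) * X j ^ (2 + 1) := by
    simp [Fin.sum_univ_three]
  have hu (i : Fin 3) : ((2 : ℕ) + 1 : ℂ) * ![a, b, c] i ≠ 0 := by
    refine mul_ne_zero (by norm_num) ?_
    fin_cases i <;> simpa
  simp_rw [hf, pderiv_sum_C_mul_X_pow, ← mul_assoc, ← map_mul]
  exact (exists_ne_zero_mul_iff hu
    (fun d => ∃ β, ∑ i, C (d i) * X i ^ 2 = linForm α * linForm β)).trans
    (exists_sum_C_mul_X_sq_eq_linForm_mul_iff hα)
end
end

section
/- Let A = ℂ[z_0, z_1, z_2] and let a, b, c, a', b', c' ∈ ℂ^×. Set f = a z_0^3 + b z_1^3 + c z_2^3 and g = a' z_0^3 + b' z_1^3 + c' z_2^3. Then the graded A-modules D_0(−log f) and D_0(−log g) are isomorphic as graded A-modules. In particular, since distinct triples (a, b, c) up to scalar give distinct curves, smooth plane cubics with vanishing j-invariant are not Torelli: the sheaf of logarithmic vector fields does not determine the curve. -/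
/-!
Rescaling the coordinates of a derivation, `δ ↦ ∑ᵢ sᵢ δ(zᵢ) ∂/∂zᵢ` with `sᵢ = aᵢ / aᵢ'`, is an
`A`-linear automorphism of `Der_ℂ(A)` of degree zero. Since `∂g/∂zᵢ = 3 aᵢ' zᵢ²`, the rescaled
derivation takes on `g` the value that the original one takes on `f`, so the automorphism carries
`D₀(−log f)` onto `D₀(−log g)`.
-/

noncomputable section

open MvPolynomial

/-- `D₀(−log f) = {δ ∈ Der_ℂ(A) ∣ δ f = 0}` as an `A`-submodule of derivations. -/
def Dlog0 (f : PolyRing3) : Submodule PolyRing3 (Derivation ℂ PolyRing3 PolyRing3) where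
  carrier := {δ | δ f = 0}
  add_mem' := fun {δ₁ δ₂} h₁ h₂ => by
    simp only [Set.mem_setOf_eq, Derivation.add_apply] at *
    simp [h₁, h₂]
  zero_mem' := by simp
  smul_mem' := fun c δ h => by
    simp only [Set.mem_setOf_eq, Derivation.smul_apply] at *
    simp [h]

namespace MvPolynomial

variable {σ R : Type*} [CommRing R]

def scaleDer (s : σ → R) :
    Derivation R (MvPolynomial σ R) (MvPolynomial σ R) →ₗ[MvPolynomial σ R]
      Derivation R (MvPolynomial σ R) (MvPolynomial σ R) where
  toFun δ := mkDerivation R fun i => C (s i) * δ (X i)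
  map_add' δ₁ δ₂ := derivation_ext fun i => by simp [mkDerivation_X, mul_add]
  map_smul' p δ := derivation_ext fun i => by
    simp only [mkDerivation_X, Derivation.smul_apply, smul_eq_mul, RingHom.id_apply]
    ring

@[simp]
lemma scaleDer_apply_X (s : σ → R) (δ : Derivation R (MvPolynomial σ R) (MvPolynomial σ R))
    (i : σ) : scaleDer s δ (X i) = C (s i) * δ (X i) :=
  mkDerivation_X _ _ _

lemma scaleDer_comp_scaleDer (s t : σ → R) :
    (scaleDer s).comp (scaleDer t) = scaleDer (s * t) :=
  LinearMap.ext fun δ => derivation_ext fun i => by simp [mul_assoc]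

lemma scaleDer_one : scaleDer (1 : σ → R) = LinearMap.id :=
  LinearMap.ext fun δ => derivation_ext fun i => by simp

def scaleDerEquiv (u : σ → Rˣ) :
    Derivation R (MvPolynomial σ R) (MvPolynomial σ R) ≃ₗ[MvPolynomial σ R]
      Derivation R (MvPolynomial σ R) (MvPolynomial σ R) :=
  LinearEquiv.ofLinearMap (scaleDer fun i => (u i : R)) (scaleDer fun i => (↑(u i)⁻¹ : R))
    (by rw [scaleDer_comp_scaleDer, ← scaleDer_one]; congr 1; ext i; simp)
    (by rw [scaleDer_comp_scaleDer, ← scaleDer_one]; congr 1; ext i; simp)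

lemma scaleDerEquiv_apply (u : σ → Rˣ) (δ : Derivation R (MvPolynomial σ R) (MvPolynomial σ R)) :
    scaleDerEquiv u δ = scaleDer (fun i => (u i : R)) δ := rfl

lemma scaleDerEquiv_symm_apply (u : σ → Rˣ)
    (δ : Derivation R (MvPolynomial σ R) (MvPolynomial σ R)) :
    (scaleDerEquiv u).symm δ = scaleDer (fun i => (↑(u i)⁻¹ : R)) δ := rfl

lemma isHomogeneous_scaleDer_apply_X {m : ℕ} (s : σ → R)
    {δ : Derivation R (MvPolynomial σ R) (MvPolynomial σ R)}
    (hδ : ∀ i, (δ (X i)).IsHomogeneous m) (i : σ) :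
    (scaleDer s δ (X i)).IsHomogeneous m := by
  simpa using (isHomogeneous_C σ (s i)).mul (hδ i)

variable [Fintype σ]

lemma derivation_apply_diagonal (a : σ → R) (n : ℕ)
    (δ : Derivation R (MvPolynomial σ R) (MvPolynomial σ R)) :
    δ (∑ i, C (a i) * X i ^ n) = ∑ i, C (n * a i) * X i ^ (n - 1) * δ (X i) := by
  simp only [map_sum]
  refine Finset.sum_congr rfl fun i _ => ?_
  rw [Derivation.leibniz, derivation_C, Derivation.leibniz_pow]
  simp only [nsmul_eq_mul, smul_eq_mul, map_mul, map_natCast]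
  ring

lemma scaleDer_apply_diagonal {a a' s : σ → R} (h : ∀ i, a' i * s i = a i) (n : ℕ)
    (δ : Derivation R (MvPolynomial σ R) (MvPolynomial σ R)) :
    scaleDer s δ (∑ i, C (a' i) * X i ^ n) = δ (∑ i, C (a i) * X i ^ n) := by
  rw [derivation_apply_diagonal, derivation_apply_diagonal]
  refine Finset.sum_congr rfl fun i _ => ?_
  simp only [scaleDer_apply_X, ← h, map_mul]
  ring

end MvPolynomial

lemma mem_Dlog0 {f : PolyRing3} {δ : Derivation ℂ PolyRing3 PolyRing3} :
    δ ∈ Dlog0 f ↔ δ f = 0 := Iff.rfl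

lemma Dlog0_map_eq {f g : PolyRing3}
    (e : Derivation ℂ PolyRing3 PolyRing3 ≃ₗ[PolyRing3] Derivation ℂ PolyRing3 PolyRing3)
    (he : ∀ δ, e δ g = δ f) :
    (Dlog0 f).map (e : Derivation ℂ PolyRing3 PolyRing3 →ₗ[PolyRing3] _) = Dlog0 g := by
  ext δ
  rw [Submodule.mem_map_equiv, mem_Dlog0, mem_Dlog0, ← he, LinearEquiv.apply_symm_apply]

lemma fermat_cubic_eq_sum (a b c : ℂ) :
    (C a * X 0 ^ 3 + C b * X 1 ^ 3 + C c * X 2 ^ 3 : PolyRing3) =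
      ∑ i, C (![a, b, c] i) * X i ^ 3 := by
  simp [Fin.sum_univ_three]

theorem not_torelli_fermat_family
    (a b c a' b' c' : ℂ) (ha : a ≠ 0) (hb : b ≠ 0) (hc : c ≠ 0)
    (ha' : a' ≠ 0) (hb' : b' ≠ 0) (hc' : c' ≠ 0) :
    ∃ e : Dlog0 (C a * X 0 ^ 3 + C b * X 1 ^ 3 + C c * X 2 ^ 3) ≃ₗ[PolyRing3]
          Dlog0 (C a' * X 0 ^ 3 + C b' * X 1 ^ 3 + C c' * X 2 ^ 3),
      (∀ (m : ℕ) (δ : Dlog0 (C a * X 0 ^ 3 + C b * X 1 ^ 3 + C c * X 2 ^ 3)),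
        (∀ i, ((δ : Derivation ℂ PolyRing3 PolyRing3) (X i)).IsHomogeneous m) →
        ∀ i, ((e δ : Derivation ℂ PolyRing3 PolyRing3) (X i)).IsHomogeneous m) ∧
      (∀ (m : ℕ) (δ : Dlog0 (C a' * X 0 ^ 3 + C b' * X 1 ^ 3 + C c' * X 2 ^ 3)),
        (∀ i, ((δ : Derivation ℂ PolyRing3 PolyRing3) (X i)).IsHomogeneous m) →
        ∀ i, ((e.symm δ : Derivation ℂ PolyRing3 PolyRing3) (X i)).IsHomogeneous m) := by
  let u : Fin 3 → ℂˣ := ![Units.mk0 (a / a') (div_ne_zero ha ha'),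
    Units.mk0 (b / b') (div_ne_zero hb hb'), Units.mk0 (c / c') (div_ne_zero hc hc')]
  have hu : ∀ i, ![a', b', c'] i * u i = ![a, b, c] i := by
    intro i; fin_cases i <;> simp [u] <;> field_simp
  have hmap : (Dlog0 (∑ i, C (![a, b, c] i) * X i ^ 3)).map (scaleDerEquiv u : _ →ₗ[PolyRing3] _)
      = Dlog0 (∑ i, C (![a', b', c'] i) * X i ^ 3) :=
    Dlog0_map_eq _ (scaleDer_apply_diagonal hu 3)
  rw [fermat_cubic_eq_sum a b c, fermat_cubic_eq_sum a' b' c']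
  refine ⟨(scaleDerEquiv u).ofSubmodules _ _ hmap, fun m δ hδ => ?_, fun m δ hδ => ?_⟩
  · rw [LinearEquiv.ofSubmodules_apply, scaleDerEquiv_apply]
    exact isHomogeneous_scaleDer_apply_X _ hδ
  · rw [LinearEquiv.ofSubmodules_symm_apply, scaleDerEquiv_symm_apply]
    exact isHomogeneous_scaleDer_apply_X _ hδ
end
end
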